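/- For every δ > 0 the function Ψ_δ is strictly decreasing on (γ_δ, ∞). -/

import Mathlib

/-!
For `z > γ_δ` put `b = p_δ⁻¹(z)`, so that `z - log b = 1 + δ / b`. The substitution
`u = 1 + δ / b - log t` gives `φ(z - log b) - φ(z) = e^{-z} · b ∫_{1/b}^1 dt / (1 + δ / b - log t)`,
hence `Ψ_δ(z) = 1 / G_δ(b)` with `G_δ = scaledLogIntegral δ`. As `b` grows, the factor `b`, the
interval `[1/b, 1]` and the positive integrand all grow, so `G_δ` is strictly increasing; and so is
`p_δ⁻¹`, as the inverse of a strictly increasing function.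
-/

open MeasureTheory Set Real

lemma integrableOn_one_div_mul_exp_Ioi {x : ℝ} (hx : 0 < x) :
    IntegrableOn (fun u : ℝ => 1 / (u * exp u)) (Ioi x) := by
  refine ((exp_neg_integrableOn_Ioi x one_pos).const_mul x⁻¹).mono' ?_ ?_
  · exact (continuousOn_const.div (continuousOn_id.mul continuous_exp.continuousOn)
      fun u (hu : x < u) => (mul_pos (hx.trans hu) (exp_pos u)).ne').aestronglyMeasurable
      measurableSet_Ioi
  · filter_upwards [ae_restrict_mem measurableSet_Ioi] with u (hu : x < u)
    rw [norm_of_nonneg (by have := hx.trans hu; positivity), one_div, mul_inv, ← exp_neg,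
      neg_one_mul]
    gcongr

lemma one_div_sub_log_pos {c t : ℝ} (hc : 0 < c) (ht : 0 < t) (ht1 : t ≤ 1) :
    0 < 1 / (c - log t) :=
  one_div_pos.2 (by linarith [log_nonpos ht.le ht1])

lemma intervalIntegrable_one_div_sub_log {c s : ℝ} (hc : 0 < c) (hs : 0 < s) (hs1 : s ≤ 1) :
    IntervalIntegrable (fun t => 1 / (c - log t)) volume s 1 := by
  refine ContinuousOn.intervalIntegrable fun t ht => ?_
  rw [uIcc_of_le hs1] at ht
  have ht0 : 0 < t := hs.trans_le ht.1
  exact (continuousAt_const.div (continuousAt_const.sub (continuousAt_log ht0.ne'))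
    (one_div_pos.1 (one_div_sub_log_pos hc ht0 ht.2)).ne').continuousWithinAt

lemma integral_one_div_mul_exp_eq {c s : ℝ} (hc : 0 < c) (hs : 0 < s) (hs1 : s ≤ 1) :
    ∫ u in c..(c - log s), 1 / (u * exp u) = exp (-c) * ∫ t in s..1, 1 / (c - log t) := by
  have hIcc : uIcc s 1 = Icc s 1 := uIcc_of_le hs1
  have hpos : ∀ t ∈ Icc s 1, 0 < t ∧ 0 < c - log t := fun t ht =>
    ⟨hs.trans_le ht.1, by linarith [log_nonpos (hs.trans_le ht.1).le ht.2]⟩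
  have hsubst := intervalIntegral.integral_comp_mul_deriv' (a := s) (b := 1)
    (f := fun t => c - log t) (f' := fun t => -t⁻¹) (g := fun u => 1 / (u * exp u))
    (fun t ht => (hasDerivAt_log (hpos t (hIcc ▸ ht)).1.ne').const_sub c)
    (hIcc ▸ (continuousOn_inv₀.mono fun t ht => (hpos t ht).1.ne').neg)
    (continuousOn_const.div (continuousOn_id.mul continuous_exp.continuousOn) <| by
      rintro _ ⟨t, ht, rfl⟩
      exact (mul_pos (hpos t (hIcc ▸ ht)).2 (exp_pos _)).ne')
  have hintegrand : EqOn (fun t => (1 / ((c - log t) * exp (c - log t))) * -t⁻¹)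
      (fun t => -(exp (-c) * (1 / (c - log t)))) (uIcc s 1) := by
    intro t ht
    obtain ⟨ht0, hct⟩ := hpos t (hIcc ▸ ht)
    simp only [exp_sub, exp_log ht0, exp_neg]
    field_simp
  simp only [Function.comp_def, log_one, sub_zero] at hsubst
  rw [intervalIntegral.integral_congr hintegrand, intervalIntegral.integral_neg,
    intervalIntegral.integral_const_mul, intervalIntegral.integral_symm c] at hsubst
  linarith

noncomputable def scaledLogIntegral (δ b : ℝ) : ℝ :=
  b * ∫ t in b⁻¹..1, 1 / (1 + δ / b - log t)

lemma setIntegral_Ioi_sub_setIntegral_Ioi_eq_scaledLogIntegral {δ b z : ℝ} (hδ : 0 ≤ δ)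
    (hb : 1 ≤ b) (hz : 1 + δ / b + log b = z) :
    (∫ u in Ioi (z - log b), 1 / (u * exp u)) - ∫ u in Ioi z, 1 / (u * exp u)
      = exp (-z) * scaledLogIntegral δ b := by
  have hb0 : 0 < b := one_pos.trans_le hb
  have hc : 0 < 1 + δ / b := by positivity
  have hzc : z - log b = 1 + δ / b := by linarith
  have hz' : z = 1 + δ / b - log b⁻¹ := by rw [log_inv]; linarith
  rw [intervalIntegral.integral_Ioi_sub_Ioi' (integrableOn_one_div_mul_exp_Ioi (hzc ▸ hc))
      (integrableOn_one_div_mul_exp_Ioi (hz' ▸ by linarith [log_nonneg hb])),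
    hzc, hz', integral_one_div_mul_exp_eq hc (inv_pos.2 hb0) (inv_le_one_of_one_le₀ hb),
    scaledLogIntegral, neg_sub, exp_sub, log_inv, exp_neg, exp_neg, exp_log hb0]
  field_simp

lemma scaledLogIntegral_pos {δ b : ℝ} (hδ : 0 ≤ δ) (hb : 1 < b) :
    0 < scaledLogIntegral δ b := by
  have hb0 : 0 < b := one_pos.trans hb
  have hc : 0 < 1 + δ / b := by positivity
  refine mul_pos hb0 (intervalIntegral.intervalIntegral_pos_of_pos_on
    (intervalIntegrable_one_div_sub_log hc (inv_pos.2 hb0) (inv_le_one_of_one_le₀ hb.le))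
    (fun t ht => one_div_sub_log_pos hc ((inv_pos.2 hb0).trans ht.1) ht.2.le)
    (inv_lt_one_of_one_lt₀ hb))

lemma strictMonoOn_scaledLogIntegral {δ : ℝ} (hδ : 0 ≤ δ) :
    StrictMonoOn (scaledLogIntegral δ) (Ioi 1) := by
  intro b₁ (hb₁ : 1 < b₁) b₂ (hb₂ : 1 < b₂) hlt
  have hb₁0 : 0 < b₁ := one_pos.trans hb₁
  have hb₂0 : 0 < b₂ := one_pos.trans hb₂
  have hc₂ : 0 < 1 + δ / b₂ := by positivity
  have hc : 1 + δ / b₂ ≤ 1 + δ / b₁ := by gcongr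
  have hinv : b₂⁻¹ ≤ b₁⁻¹ := inv_anti₀ hb₁0 hlt.le
  have hint₂ :=
    intervalIntegrable_one_div_sub_log hc₂ (inv_pos.2 hb₂0) (inv_le_one_of_one_le₀ hb₂.le)
  have hintegral : (∫ t in b₁⁻¹..1, 1 / (1 + δ / b₁ - log t))
      ≤ ∫ t in b₂⁻¹..1, 1 / (1 + δ / b₂ - log t) := calc
    _ ≤ ∫ t in b₁⁻¹..1, 1 / (1 + δ / b₂ - log t) := by
      refine intervalIntegral.integral_mono_on (inv_le_one_of_one_le₀ hb₁.le)
        (intervalIntegrable_one_div_sub_log (hc₂.trans_le hc) (inv_pos.2 hb₁0)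
          (inv_le_one_of_one_le₀ hb₁.le))
        (intervalIntegrable_one_div_sub_log hc₂ (inv_pos.2 hb₁0)
          (inv_le_one_of_one_le₀ hb₁.le))
        fun t ht => ?_
      have ht0 : 0 < t := (inv_pos.2 hb₁0).trans_le ht.1
      exact one_div_le_one_div_of_le (one_div_pos.1 (one_div_sub_log_pos hc₂ ht0 ht.2))
        (by linarith)
    _ ≤ _ := by
      refine intervalIntegral.integral_mono_interval hinv (inv_le_one_of_one_le₀ hb₁.le) le_rfl
        ?_ hint₂
      filter_upwards [ae_restrict_mem measurableSet_Ioc] with t ht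
      exact (one_div_sub_log_pos hc₂ ((inv_pos.2 hb₂0).trans ht.1) ht.2).le
  calc scaledLogIntegral δ b₁ < b₂ * ∫ t in b₁⁻¹..1, 1 / (1 + δ / b₁ - log t) :=
        mul_lt_mul_of_pos_right hlt
          (pos_of_mul_pos_right (scaledLogIntegral_pos hδ hb₁) hb₁0.le)
    _ ≤ scaledLogIntegral δ b₂ := mul_le_mul_of_nonneg_left hintegral hb₂0.le

lemma strictMonoOn_one_add_div_add_log {δ : ℝ} (hδ : 0 < δ) :
    StrictMonoOn (fun y => 1 + δ / y + log y) (Ici δ) := by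
  intro y₁ (hy₁ : δ ≤ y₁) y₂ (hy₂ : δ ≤ y₂) hlt
  have hy₁0 : 0 < y₁ := hδ.trans_le hy₁
  have hy₂0 : 0 < y₂ := hδ.trans_le hy₂
  have hlog : log y₁ - log y₂ < y₁ / y₂ - 1 := by
    rw [← log_div hy₁0.ne' hy₂0.ne']
    exact log_lt_sub_one_of_pos (by positivity) ((div_lt_one hy₂0).2 hlt).ne
  have hdiv : δ / y₁ - δ / y₂ ≤ 1 - y₁ / y₂ := by
    rw [div_sub_div _ _ hy₁0.ne' hy₂0.ne', one_sub_div hy₂0.ne',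
      div_le_div_iff₀ (by positivity) hy₂0]
    nlinarith [mul_le_mul_of_nonneg_right hy₁ (sub_nonneg.2 hlt.le)]
  show 1 + δ / y₁ + log y₁ < 1 + δ / y₂ + log y₂
  linarith

lemma two_add_log_lt_one_add_div_add_log {δ y : ℝ} (hδ : 0 < δ) (hδ1 : δ < 1) (hy : 1 ≤ y) :
    2 + log δ < 1 + δ / y + log y := by
  have hy0 : 0 < y := one_pos.trans_le hy
  have : (1 - δ) / y ≤ 1 - δ := div_le_self (by linarith) hy
  have : δ / y = 1 / y - (1 - δ) / y := by ring
  linarith [log_lt_sub_one_of_pos hδ hδ1.ne, one_sub_inv_le_log_of_pos hy0, one_div y]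

theorem stmt_8_general (δ : ℝ) (hδ : 0 < δ)
    (φ : ℝ → ℝ) (hφ : ∀ x : ℝ, φ x = ∫ u in Set.Ioi x, 1 / (u * Real.exp u))
    (q : ℝ → ℝ)
    (hq₂ : ∀ z : ℝ, min (1 + δ) (2 + Real.log δ) ≤ z →
      max δ 1 ≤ q z ∧ 1 + δ / q z + Real.log (q z) = z)
    (Ψ : ℝ → ℝ)
    (hΨ : ∀ z : ℝ, Ψ z = Real.exp (-z) / (φ (z - Real.log (q z)) - φ z)) :
    StrictAntiOn Ψ (Set.Ioi (min (1 + δ) (2 + Real.log δ))) := by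
  rw [min_eq_right (by linarith [log_le_sub_one_of_pos hδ])] at hq₂ ⊢
  have hδ1 : 1 ≤ δ := by
    by_contra! hδ1
    obtain ⟨hq, hpq⟩ := hq₂ _ le_rfl
    exact (two_add_log_lt_one_add_div_add_log hδ hδ1 ((le_max_right _ _).trans hq)).ne' hpq
  rw [max_eq_left hδ1] at hq₂
  have hp := strictMonoOn_one_add_div_add_log hδ
  have hq_mono : StrictMonoOn q (Ioi (2 + log δ)) := fun z₁ hz₁ z₂ hz₂ hlt => by
    obtain ⟨hqz₁, hpq₁⟩ := hq₂ z₁ (le_of_lt hz₁)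
    obtain ⟨hqz₂, hpq₂⟩ := hq₂ z₂ (le_of_lt hz₂)
    exact (hp.lt_iff_lt hqz₁ hqz₂).1 (by simpa only [hpq₁, hpq₂])
  have hq_gt : ∀ z ∈ Ioi (2 + log δ), 1 < q z := fun z hz => by
    obtain ⟨hqz, hpq⟩ := hq₂ z (le_of_lt hz)
    have hpδ : 1 + δ / δ + log δ = 2 + log δ := by rw [div_self hδ.ne']; ring
    exact hδ1.trans_lt <|
      (hp.lt_iff_lt self_mem_Ici hqz).1 (by simpa only [hpδ, hpq] using mem_Ioi.1 hz)
  have hΨ_eq : ∀ z ∈ Ioi (2 + log δ), Ψ z = (scaledLogIntegral δ (q z))⁻¹ := fun z hz => by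
    rw [hΨ, hφ, hφ, setIntegral_Ioi_sub_setIntegral_Ioi_eq_scaledLogIntegral hδ.le (hq_gt z hz).le
      (hq₂ z (le_of_lt hz)).2, div_mul_cancel_left₀ (exp_ne_zero _)]
  intro z₁ hz₁ z₂ hz₂ hlt
  rw [hΨ_eq z₁ hz₁, hΨ_eq z₂ hz₂]
  exact inv_strictAnti₀ (scaledLogIntegral_pos hδ.le (hq_gt z₁ hz₁))
    (strictMonoOn_scaledLogIntegral hδ.le (hq_gt z₁ hz₁) (hq_gt z₂ hz₂) (hq_mono hz₁ hz₂ hlt))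

theorem stmt_8 (δ : ℝ) (hδ : 0 < δ)
    (φ : ℝ → ℝ) (hφ : ∀ x : ℝ, φ x = ∫ u in Set.Ioi x, 1 / (u * Real.exp u))
    (q : ℝ → ℝ)
    (hq₁ : ∀ y : ℝ, max δ 1 ≤ y → q (1 + δ / y + Real.log y) = y)
    (hq₂ : ∀ z : ℝ, min (1 + δ) (2 + Real.log δ) ≤ z →
      max δ 1 ≤ q z ∧ 1 + δ / q z + Real.log (q z) = z)
    (Ψ : ℝ → ℝ)
    (hΨ : ∀ z : ℝ, Ψ z = Real.exp (-z) / (φ (z - Real.log (q z)) - φ z)) :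
    StrictAntiOn Ψ (Set.Ioi (min (1 + δ) (2 + Real.log δ))) :=
  stmt_8_general δ hδ φ hφ q hq₂ Ψ hΨ
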